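/- arXiv:2001.08017 — 3 statements merged into one kernel-verified Lean document; each statement's English description precedes it below -/
import Mathlib

section
/- Let (R_e)_{e∈ℕ} be any sequence of equivalence relations on ℕ that is uniformly c.e., i.e., {⟨e,x,y⟩ : x R_e y} is computably enumerable. Then there exists a co-c.e. (Π⁰₁) equivalence relation S on ℕ such that for every e ∈ ℕ: S has an equivalence class of cardinality exactly e+1 if and only if R_e has no equivalence class of cardinality exactly e+1. In particular, S is not isomorphic to R_e for any e. -/
/-- A binary relation on ℕ is c.e. (Σ⁰₁) if its set of pairs is computably enumerable. -/
def RelCE (R : ℕ → ℕ → Prop) : Prop := REPred fun p : ℕ × ℕ => R p.1 p.2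

/-- A binary relation on ℕ is co-c.e. (Π⁰₁) if its complement is computably enumerable. -/
def RelCoCE (R : ℕ → ℕ → Prop) : Prop := RelCE fun x y => ¬ R x y

/-- Isomorphism of binary relations on ℕ. -/
def RelIso' (R R' : ℕ → ℕ → Prop) : Prop :=
  ∃ f : ℕ → ℕ, Function.Bijective f ∧ ∀ x y, R x y ↔ R' (f x) (f y)

/-! `S` lives on ℕ cut into blocks, block `e` consisting of a core of `e + 1` points and
infinitely many infinite parts. At first each block is a single class; part `n` of block `e` is
split off as a class of its own once some stage `s ≥ n` of an enumeration of `R_e` shows no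
`x ≤ n` in a class of size `e + 1`. Splitting is a c.e. event, so `S` is co-c.e. The only class of
`S` that can have `e + 1` elements is the core of block `e`, and it does iff every part of block `e`
is split off. Approximate class sizes grow monotonically to the true ones, so a class of size
`e + 1` is eventually seen as such forever, while otherwise each `x` is eventually seen not to be in
one: all parts of block `e` are split off iff `R_e` has no class of size `e + 1`. -/

open Filter
open Nat.Partrec (Code)

theorem PrimrecRel.rePred_exists {α : Type*} [Primcodable α] {q : α → ℕ → Prop}
    (hq : PrimrecRel q) : REPred fun a => ∃ s, q a s := by
  obtain ⟨inst, hdec⟩ := hq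
  let _ : DecidableRel q := fun a s => inst (a, s)
  have hfind : Partrec fun a => Nat.rfind ((fun s => decide (q a s) : ℕ → Bool) : ℕ →. Bool) :=
    Partrec.rfind hdec.to_comp.partrec.to₂
  exact hfind.dom_re.of_eq fun a => by simp

theorem REPred.exists_primrec_monotone {α : Type*} [Primcodable α] {p : α → Prop}
    (hp : REPred p) : ∃ f : α → ℕ → Bool, Primrec₂ f ∧
      (∀ a, Monotone fun s => f a s = true) ∧ ∀ a, p a ↔ ∃ s, f a s = true := by
  obtain ⟨c, hc⟩ := Code.exists_code.1 hp
  refine ⟨fun a s => (Code.evaln s c (Encodable.encode a)).isSome, ?_, ?_, fun a => ?_⟩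
  · exact Primrec.option_isSome.comp (Code.primrec_evaln.comp
      ((Primrec.snd.pair (Primrec.const c)).pair (Primrec.encode.comp Primrec.fst)))
  · intro a s s' hss' hs
    obtain ⟨v, hv⟩ := Option.isSome_iff_exists.1 hs
    exact Option.isSome_iff_exists.2 ⟨v, Code.evaln_mono hss' hv⟩
  · have hdom : p a ↔ (Code.eval c (Encodable.encode a)).Dom := by
      simp [hc, Encodable.encodek, Part.assert]
    rw [hdom, Part.dom_iff_mem]
    simp only [Code.evaln_complete, Option.isSome_iff_exists]
    exact ⟨fun ⟨v, s, h⟩ => ⟨s, v, h⟩, fun ⟨s, v, h⟩ => ⟨v, s, h⟩⟩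

theorem RelIso'.exists_encard_eq_iff {S T : ℕ → ℕ → Prop} (h : RelIso' S T) (k : ℕ∞) :
    (∃ x, {y | S x y}.encard = k) ↔ ∃ x, {y | T x y}.encard = k := by
  obtain ⟨f, hf, hST⟩ := h
  have himage : ∀ x, f '' {y | S x y} = {y | T (f x) y} := fun x => by
    ext z
    obtain ⟨y, rfl⟩ := hf.2 z
    exact hf.1.mem_set_image.trans (hST x y)
  simp only [hf.2.exists (p := fun x => {y | T x y}.encard = k), ← himage, hf.1.encard_image]

def approxCard (r : ℕ → ℕ → ℕ → Bool) (x s : ℕ) : ℕ :=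
  ((Finset.range s).filter fun y => r x y s).card

def ApproxCardAvoids (r : ℕ → ℕ → ℕ → Bool) (m n : ℕ) : Prop :=
  ∃ s, n ≤ s ∧ ∀ x ≤ n, approxCard r x s ≠ m

section ApproxCard

variable {R : ℕ → ℕ → Prop} {r : ℕ → ℕ → ℕ → Bool}
variable (hr : ∀ x y, R x y ↔ ∃ s, r x y s = true)
include hr

theorem approxCard_le_encard (x s : ℕ) : (approxCard r x s : ℕ∞) ≤ {y | R x y}.encard := by
  rw [approxCard, ← Set.encard_coe_eq_coe_finsetCard]
  refine Set.encard_mono fun y hy => ?_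
  simp only [Finset.coe_filter, Finset.mem_range, Set.mem_ofPred_eq] at hy ⊢
  exact (hr x y).2 ⟨s, hy.2⟩

variable (hmono : ∀ x y, Monotone fun s => r x y s = true)
include hmono

theorem eventually_le_approxCard {x k : ℕ} (hk : (k : ℕ∞) ≤ {y | R x y}.encard) :
    ∀ᶠ s in atTop, k ≤ approxCard r x s := by
  obtain ⟨t, hts, htk⟩ := Set.exists_subset_encard_eq hk
  obtain ⟨T, rfl⟩ := (Set.finite_of_encard_eq_coe htk).exists_finset_coe
  have hT : ∀ y ∈ T, ∀ᶠ s in atTop, y < s ∧ r x y s = true := fun y hy => by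
    obtain ⟨s₀, hs₀⟩ := (hr x y).1 (hts hy)
    exact (eventually_gt_atTop y).and (eventually_atTop.2 ⟨s₀, fun s hs => hmono x y hs hs₀⟩)
  filter_upwards [T.eventually_all.2 hT] with s hs
  rw [Set.encard_coe_eq_coe_finsetCard, Nat.cast_inj] at htk
  rw [← htk]
  exact Finset.card_le_card fun y hy => by simpa using hs y hy

theorem eventually_approxCard_eq {x m : ℕ} (h : {y | R x y}.encard = m) :
    ∀ᶠ s in atTop, approxCard r x s = m := by
  filter_upwards [eventually_le_approxCard hr hmono h.ge] with s hs
  exact le_antisymm (by exact_mod_cast h ▸ approxCard_le_encard hr x s) hs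

theorem eventually_approxCard_ne {x m : ℕ} (h : {y | R x y}.encard ≠ m) :
    ∀ᶠ s in atTop, approxCard r x s ≠ m := by
  rcases h.lt_or_gt with hlt | hgt
  · refine Eventually.of_forall fun s hs => ?_
    exact (approxCard_le_encard hr x s).not_gt (hs ▸ hlt)
  · have hle : ((m + 1 : ℕ) : ℕ∞) ≤ {y | R x y}.encard := by
      exact_mod_cast Order.add_one_le_of_lt hgt
    filter_upwards [eventually_le_approxCard hr hmono hle] with s hs
    omega

theorem forall_approxCardAvoids_iff (m : ℕ) :
    (∀ n, ApproxCardAvoids r m n) ↔ ∀ x, {y | R x y}.encard ≠ m := by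
  refine ⟨fun h x hx => ?_, fun h n => ?_⟩
  · obtain ⟨N, hN⟩ := eventually_atTop.1 (eventually_approxCard_eq hr hmono hx)
    obtain ⟨s, hs, hne⟩ := h (max x N)
    exact hne x (le_max_left x N) (hN s ((le_max_right x N).trans hs))
  · have hsmall : ∀ᶠ s in atTop, ∀ x ∈ Finset.Iic n, approxCard r x s ≠ m :=
      (Finset.Iic n).eventually_all.2 fun x _ => eventually_approxCard_ne hr hmono (h x)
    obtain ⟨s, hs, hne⟩ := ((eventually_ge_atTop n).and hsmall).exists
    exact ⟨s, hs, fun x hx => hne x (Finset.mem_Iic.2 hx)⟩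

end ApproxCard

/- Block `e` consists of the `e + 1` core points `⟪e, z⟫`, `z ≤ e`, and, for each `n`, of
the infinitely many points `⟪e, e + 1 + ⟪n, i⟫⟫` forming its part `n`. -/
def blockIdx (x : ℕ) : ℕ := x.unpair.1

def partIdx (x : ℕ) : Option ℕ :=
  if x.unpair.2 ≤ x.unpair.1 then none else some (x.unpair.2 - (x.unpair.1 + 1)).unpair.1

theorem blockIdx_pair (e z : ℕ) : blockIdx (Nat.pair e z) = e := by
  simp [blockIdx]

theorem partIdx_pair_of_le {e z : ℕ} (h : z ≤ e) : partIdx (Nat.pair e z) = none := by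
  simp [partIdx, h]

theorem partIdx_pair_add (e n i : ℕ) :
    partIdx (Nat.pair e (e + 1 + Nat.pair n i)) = some n := by
  have h : ¬ e + 1 + Nat.pair n i ≤ e := by omega
  simp [partIdx, h]

theorem encard_setOf_partIdx_eq_none (e : ℕ) :
    {y | blockIdx y = e ∧ partIdx y = none}.encard = (e + 1 : ℕ) := by
  have hcore : {y | blockIdx y = e ∧ partIdx y = none} = Nat.pair e '' Set.Iic e := by
    ext y
    refine ⟨fun ⟨hb, hp⟩ => ⟨y.unpair.2, ?_, ?_⟩, ?_⟩
    · rw [Set.mem_Iic, ← hb, blockIdx]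
      by_contra hlt
      simp [partIdx, hlt] at hp
    · rw [← hb, blockIdx, Nat.pair_unpair]
    · rintro ⟨z, hz, rfl⟩
      exact ⟨blockIdx_pair e z, partIdx_pair_of_le hz⟩
  have hinj : Function.Injective (Nat.pair e) := fun a b h => (Nat.pair_eq_pair.1 h).2
  rw [hcore, hinj.encard_image, ← Finset.coe_Iic, Set.encard_coe_eq_coe_finsetCard, Nat.card_Iic]

theorem infinite_setOf_partIdx_eq_some (e n : ℕ) :
    {y | blockIdx y = e ∧ partIdx y = some n}.Infinite :=
  Set.infinite_of_injective_forall_mem (f := fun i => Nat.pair e (e + 1 + Nat.pair n i))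
    (fun i j h => by simpa [Nat.pair_eq_pair] using h)
    (fun i => ⟨blockIdx_pair _ _, partIdx_pair_add e n i⟩)

section SplitRel

variable (D : ℕ → ℕ → Prop)

def IsSplit (x : ℕ) : Prop := ∃ n, partIdx x = some n ∧ D (blockIdx x) n

def SplitRel (x y : ℕ) : Prop :=
  blockIdx x = blockIdx y ∧ (partIdx x = partIdx y ∨ ¬ IsSplit D x ∧ ¬ IsSplit D y)

variable {D}

theorem isSplit_congr {x y : ℕ} (hb : blockIdx x = blockIdx y) (hp : partIdx x = partIdx y) :
    IsSplit D x ↔ IsSplit D y := by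
  rw [IsSplit, IsSplit, hb, hp]

variable (D) in
theorem splitRel_equivalence : Equivalence (SplitRel D) where
  refl _ := ⟨rfl, .inl rfl⟩
  symm := fun ⟨hb, hp⟩ => ⟨hb.symm, hp.imp Eq.symm And.symm⟩
  trans := by
    rintro x y z ⟨hxy, hpxy | ⟨hx, hy⟩⟩ ⟨hyz, hpyz | ⟨hy', hz⟩⟩
    · exact ⟨hxy.trans hyz, .inl (hpxy.trans hpyz)⟩
    · exact ⟨hxy.trans hyz, .inr ⟨(isSplit_congr hxy hpxy).not.2 hy', hz⟩⟩
    · exact ⟨hxy.trans hyz, .inr ⟨hx, (isSplit_congr hyz hpyz).not.1 hy⟩⟩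
    · exact ⟨hxy.trans hyz, .inr ⟨hx, hz⟩⟩

theorem setOf_splitRel_of_isSplit {x : ℕ} (hx : IsSplit D x) :
    {y | SplitRel D x y} = {y | blockIdx y = blockIdx x ∧ partIdx y = partIdx x} := by
  ext y
  refine ⟨fun ⟨hb, hp⟩ => ⟨hb.symm, ?_⟩, fun ⟨hb, hp⟩ => ⟨hb.symm, .inl hp.symm⟩⟩
  exact (hp.resolve_right fun h => h.1 hx).symm

theorem setOf_splitRel_of_not_isSplit {x : ℕ} (hx : ¬ IsSplit D x) :
    {y | SplitRel D x y} = {y | blockIdx y = blockIdx x ∧ ¬ IsSplit D y} := by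
  ext y
  refine ⟨fun ⟨hb, hp⟩ => ⟨hb.symm, ?_⟩, fun ⟨hb, hy⟩ => ⟨hb.symm, .inr ⟨hx, hy⟩⟩⟩
  exact hp.elim (fun h => (isSplit_congr hb h).not.1 hx) And.right

theorem setOf_not_isSplit_of_forall {e : ℕ} (h : ∀ n, D e n) :
    {y | blockIdx y = e ∧ ¬ IsSplit D y} = {y | blockIdx y = e ∧ partIdx y = none} := by
  ext y
  refine and_congr_right fun hb => ?_
  cases hp : partIdx y with
  | none => simp [IsSplit, hp]
  | some n => simp [IsSplit, hp, hb, h n]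

theorem infinite_setOf_not_isSplit {e n : ℕ} (h : ¬ D e n) :
    {y | blockIdx y = e ∧ ¬ IsSplit D y}.Infinite := by
  refine (infinite_setOf_partIdx_eq_some e n).mono ?_
  rintro y ⟨hb, hp⟩
  refine ⟨hb, fun ⟨m, hm, hD⟩ => h ?_⟩
  rw [hp, Option.some_inj] at hm
  rwa [hb, ← hm] at hD

theorem exists_encard_setOf_splitRel_eq_iff (e : ℕ) :
    (∃ x, {y | SplitRel D x y}.encard = (e + 1 : ℕ)) ↔ ∀ n, D e n := by
  refine ⟨fun ⟨x, hx⟩ => ?_, fun h => ⟨Nat.pair e 0, ?_⟩⟩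
  · have hfin : {y | SplitRel D x y}.Finite := Set.finite_of_encard_eq_coe hx
    by_cases hs : IsSplit D x
    · rw [setOf_splitRel_of_isSplit hs] at hfin
      obtain ⟨n, hn, -⟩ := hs
      exact absurd hfin (hn ▸ infinite_setOf_partIdx_eq_some _ n)
    rw [setOf_splitRel_of_not_isSplit hs] at hfin hx
    have hall : ∀ n, D (blockIdx x) n := fun n => by
      by_contra hn
      exact infinite_setOf_not_isSplit hn hfin
    rw [setOf_not_isSplit_of_forall hall, encard_setOf_partIdx_eq_none, Nat.cast_inj,
      Nat.add_right_cancel_iff] at hx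
    exact hx ▸ hall
  · have hx : ¬ IsSplit D (Nat.pair e 0) := fun ⟨n, hn, _⟩ => by
      simp [partIdx_pair_of_le (Nat.zero_le e)] at hn
    rw [setOf_splitRel_of_not_isSplit hx, blockIdx_pair, setOf_not_isSplit_of_forall h,
      encard_setOf_partIdx_eq_none]

end SplitRel

section Computability

open Primrec

theorem primrec_blockIdx : Primrec blockIdx :=
  fst.comp unpair

theorem primrec_partIdx : Primrec partIdx :=
  ite (nat_le.comp (snd.comp unpair) primrec_blockIdx) (const none)
    (option_some.comp (fst.comp (unpair.comp
      (nat_sub.comp (snd.comp unpair) (succ.comp primrec_blockIdx)))))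

theorem exists_primrecRel_isSplit {D : ℕ → ℕ → Prop}
    (hD : REPred fun p : ℕ × ℕ => D p.1 p.2) :
    ∃ q : ℕ → ℕ → Prop, PrimrecRel q ∧ ∀ x, IsSplit D x ↔ ∃ s, q x s := by
  obtain ⟨d, hd, -, hDd⟩ := hD.exists_primrec_monotone
  refine ⟨fun x s => (partIdx x).isSome ∧ d (blockIdx x, (partIdx x).getD 0) s = true,
    ?_, fun x => ?_⟩
  · exact (Primrec.eq.comp (option_isSome.comp (primrec_partIdx.comp fst)) (const true)).and
      (Primrec.eq.comp (hd.comp ((primrec_blockIdx.comp fst).pair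
        (option_getD.comp (primrec_partIdx.comp fst) (const 0))) snd) (const true))
  · cases hp : partIdx x with
    | none => simp [IsSplit, hp]
    | some n => simpa [IsSplit, hp] using hDd (blockIdx x, n)

theorem relCoCE_splitRel {D : ℕ → ℕ → Prop} (hD : REPred fun p : ℕ × ℕ => D p.1 p.2) :
    RelCoCE (SplitRel D) := by
  obtain ⟨q, hq, hsplit⟩ := exists_primrecRel_isSplit hD
  have hstage : PrimrecRel fun (p : ℕ × ℕ) s =>
      blockIdx p.1 ≠ blockIdx p.2 ∨ partIdx p.1 ≠ partIdx p.2 ∧ (q p.1 s ∨ q p.2 s) :=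
    (Primrec.eq.comp (primrec_blockIdx.comp (fst.comp fst))
      (primrec_blockIdx.comp (snd.comp fst))).not.or <|
    (Primrec.eq.comp (primrec_partIdx.comp (fst.comp fst))
      (primrec_partIdx.comp (snd.comp fst))).not.and <|
    (hq.comp (fst.comp fst) snd).or (hq.comp (snd.comp fst) snd)
  refine hstage.rePred_exists.of_eq fun p => ?_
  by_cases hb : blockIdx p.1 = blockIdx p.2
  · simp only [SplitRel, hb, hsplit, true_and, not_or, not_and_or, not_not, ne_eq,
      not_true_eq_false, false_or, exists_and_left, exists_or]
  · simp [SplitRel, hb]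

theorem primrec_approxCard {f : ℕ × ℕ × ℕ → ℕ → Bool} (hf : Primrec₂ f) :
    Primrec fun q : ℕ × ℕ × ℕ => approxCard (fun x y s => f (q.1, x, y) s) q.2.1 q.2.2 := by
  have hstage : PrimrecRel fun (y : ℕ) (q : ℕ × ℕ × ℕ) => f (q.1, q.2.1, y) q.2.2 = true :=
    Primrec.eq.comp (hf.comp ((fst.comp snd).pair ((fst.comp (snd.comp snd)).pair fst))
      (snd.comp (snd.comp snd))) (const true)
  refine (list_length.comp (hstage.listFilter.comp (list_range.comp (snd.comp snd))
    Primrec.id)).of_eq fun q => ?_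
  simp [approxCard, Finset.card, Multiset.range, Multiset.filter_coe]

theorem rePred_approxCardAvoids {f : ℕ × ℕ × ℕ → ℕ → Bool} (hf : Primrec₂ f) :
    REPred fun p : ℕ × ℕ => ApproxCardAvoids (fun x y s => f (p.1, x, y) s) (p.1 + 1) p.2 := by
  have hne : PrimrecRel fun (x : ℕ) (q : (ℕ × ℕ) × ℕ) =>
      approxCard (fun x y s => f (q.1.1, x, y) s) x q.2 ≠ q.1.1 + 1 :=
    (Primrec.eq.comp ((primrec_approxCard hf).comp
      ((fst.comp (fst.comp snd)).pair (fst.pair (snd.comp snd))))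
      (succ.comp (fst.comp (fst.comp snd)))).not
  have hstage : PrimrecRel fun (p : ℕ × ℕ) s => p.2 ≤ s ∧
      ∀ x ∈ List.range (p.2 + 1), approxCard (fun x y s => f (p.1, x, y) s) x s ≠ p.1 + 1 :=
    (nat_le.comp (snd.comp fst) snd).and
      (hne.forall_mem_list.comp (list_range.comp (succ.comp (snd.comp fst))) Primrec.id)
  exact hstage.rePred_exists.of_eq fun p => by simp [ApproxCardAvoids]

end Computability

theorem coceer_diagonalizing_against_uniformly_ce_family_general
    (R : ℕ → ℕ → ℕ → Prop)
    (hCE : REPred fun t : ℕ × ℕ × ℕ => R t.1 t.2.1 t.2.2) :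
    ∃ S : ℕ → ℕ → Prop, Equivalence S ∧ RelCoCE S ∧
      (∀ e : ℕ, (∃ x, ({y | S x y}).encard = ((e + 1 : ℕ) : ℕ∞)) ↔
        ¬ ∃ x, ({y | R e x y}).encard = ((e + 1 : ℕ) : ℕ∞)) ∧
      (∀ e : ℕ, ¬ RelIso' S (R e)) := by
  obtain ⟨f, hf, hmono, hR⟩ := hCE.exists_primrec_monotone
  let D (e : ℕ) : ℕ → Prop := ApproxCardAvoids (fun x y s => f (e, x, y) s) (e + 1)
  have hsizes (e : ℕ) : (∃ x, {y | SplitRel D x y}.encard = ((e + 1 : ℕ) : ℕ∞)) ↔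
      ¬ ∃ x, {y | R e x y}.encard = ((e + 1 : ℕ) : ℕ∞) := by
    rw [exists_encard_setOf_splitRel_eq_iff, not_exists]
    exact forall_approxCardAvoids_iff (fun x y => hR (e, x, y)) (fun x y => hmono (e, x, y)) _
  refine ⟨SplitRel D, splitRel_equivalence D, relCoCE_splitRel (rePred_approxCardAvoids hf),
    hsizes, fun e hiso => ?_⟩
  exact iff_not_self ((hiso.exists_encard_eq_iff _).symm.trans (hsizes e))

/-- Given a uniformly c.e. sequence `(R_e)` of equivalence relations on ℕ, there is a
co-c.e. equivalence relation `S` such that for each `e`, `S` has a class of cardinality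
exactly `e+1` iff `R_e` has no class of cardinality exactly `e+1`; in particular `S` is
isomorphic to no `R_e`. -/
theorem coceer_diagonalizing_against_uniformly_ce_family
    (R : ℕ → ℕ → ℕ → Prop) (hEquiv : ∀ e, Equivalence (R e))
    (hCE : REPred fun t : ℕ × ℕ × ℕ => R t.1 t.2.1 t.2.2) :
    ∃ S : ℕ → ℕ → Prop, Equivalence S ∧ RelCoCE S ∧
      (∀ e : ℕ, (∃ x, ({y | S x y}).encard = ((e + 1 : ℕ) : ℕ∞)) ↔
        ¬ ∃ x, ({y | R e x y}).encard = ((e + 1 : ℕ) : ℕ∞)) ∧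
      (∀ e : ℕ, ¬ RelIso' S (R e)) :=
  coceer_diagonalizing_against_uniformly_ce_family_general R hCE
end

section
/- Fix X ⊆ ℕ. Partition ℕ into consecutive finite blocks so that the i-th block has exactly 2i+4 elements a^i_0, a^i_1, …, a^i_{2i+3}, and define a binary relation S_X on ℕ by: S_X is reflexive; a^i_k S_X a^i_l for all k,l ≤ 2i+2; a^i_{2i+3} S_X a^i_k (for k ≤ 2i+2) if and only if i ∈ X; and no two elements of different blocks are related. Then S_X is an equivalence relation on ℕ, and for every i ∈ ℕ: S_X has an equivalence class of cardinality exactly 2i+4 if and only if i ∈ X, and S_X has an equivalence class of cardinality exactly 2i+3 if and only if i ∉ X. -/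
/-- The starting point of the `i`-th block: the blocks are consecutive and the `j`-th
block has `2j+4` elements, so block `i` starts at `∑_{j<i} (2j+4) = i² + 3i`. -/
def blockStart (i : ℕ) : ℕ := i * i + 3 * i

/-- The equivalence relation `S_X`: within the `i`-th block (whose elements are
`a^i_k = blockStart i + k` for `k < 2i+4`), the elements `a^i_0, …, a^i_{2i+2}` are all
related, and `a^i_{2i+3}` is related to them iff `i ∈ X`; elements of different blocks
are unrelated. -/
def SX (X : Set ℕ) (x y : ℕ) : Prop :=
  x = y ∨ ∃ i k l : ℕ, k < 2 * i + 4 ∧ l < 2 * i + 4 ∧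
    x = blockStart i + k ∧ y = blockStart i + l ∧
    ((k ≤ 2 * i + 2 ∧ l ≤ 2 * i + 2) ∨ i ∈ X)

lemma blockStart_mono : StrictMono blockStart := by
  intro a b h
  have : a * a ≤ b * b := Nat.mul_le_mul h.le h.le
  unfold blockStart; omega

lemma blockStart_succ (i : ℕ) : blockStart i + (2 * i + 4) = blockStart (i + 1) := by
  unfold blockStart; ring

lemma decomp_unique {i k i' k' : ℕ} (hk : k < 2 * i + 4) (hk' : k' < 2 * i' + 4)
    (h : blockStart i + k = blockStart i' + k') : i = i' ∧ k = k' := by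
  rcases lt_trichotomy i i' with hlt | heq | hgt
  · have h1 : blockStart (i + 1) ≤ blockStart i' := blockStart_mono.monotone hlt
    have := blockStart_succ i
    omega
  · subst heq; omega
  · have h1 : blockStart (i' + 1) ≤ blockStart i := blockStart_mono.monotone hgt
    have := blockStart_succ i'
    omega

lemma decomp_exists (x : ℕ) : ∃ j k, k < 2 * j + 4 ∧ x = blockStart j + k := by
  induction x with
  | zero => exact ⟨0, 0, by norm_num, by simp [blockStart]⟩
  | succ n ih =>
    obtain ⟨j, k, hk, rfl⟩ := ih
    by_cases h : k + 1 < 2 * j + 4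
    · exact ⟨j, k + 1, h, by omega⟩
    · refine ⟨j + 1, 0, by omega, ?_⟩
      have := blockStart_succ j; omega

lemma SX_equiv (X : Set ℕ) : Equivalence (SX X) := by
  constructor
  · intro x; exact Or.inl rfl
  · rintro x y (rfl | ⟨i, k, l, hk, hl, hx, hy, hc⟩)
    · exact Or.inl rfl
    · exact Or.inr ⟨i, l, k, hl, hk, hy, hx, by tauto⟩
  · rintro x y z (rfl | ⟨i, k, l, hk, hl, hx, hy, hc⟩) hyz
    · exact hyz
    · rcases hyz with rfl | ⟨i', k', l', hk', hl', hy', hz, hc'⟩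
      · exact Or.inr ⟨i, k, l, hk, hl, hx, hy, hc⟩
      · obtain ⟨rfl, rfl⟩ := decomp_unique hl hk' (hy.symm.trans hy')
        exact Or.inr ⟨i, k, l', hk, hl', hx, hz, by tauto⟩

lemma encard_image_Iio (j n : ℕ) :
    ((blockStart j + ·) '' Set.Iio n).encard = (n : ℕ∞) := by
  rw [(add_right_injective (blockStart j)).encard_image]
  rw [← Finset.coe_range, Set.encard_coe_eq_coe_finsetCard, Finset.card_range]

lemma class_mem {X : Set ℕ} {j k : ℕ} (hj : j ∈ X) (hk : k < 2 * j + 4) :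
    {y | SX X (blockStart j + k) y} = (blockStart j + ·) '' Set.Iio (2 * j + 4) := by
  ext y
  simp only [Set.mem_setOf_eq, Set.mem_image, Set.mem_Iio, SX]
  constructor
  · rintro (rfl | ⟨i, k', l, hk', hl, hx, rfl, hc⟩)
    · exact ⟨k, hk, rfl⟩
    · obtain ⟨rfl, rfl⟩ := decomp_unique hk hk' hx
      exact ⟨l, hl, rfl⟩
  · rintro ⟨l, hl, rfl⟩
    exact Or.inr ⟨j, k, l, hk, hl, rfl, rfl, Or.inr hj⟩

lemma class_small {X : Set ℕ} {j k : ℕ} (hj : j ∉ X) (hk : k ≤ 2 * j + 2) :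
    {y | SX X (blockStart j + k) y} = (blockStart j + ·) '' Set.Iio (2 * j + 3) := by
  ext y
  simp only [Set.mem_setOf_eq, Set.mem_image, Set.mem_Iio, SX]
  constructor
  · rintro (rfl | ⟨i, k', l, hk', hl, hx, rfl, hc⟩)
    · exact ⟨k, by omega, rfl⟩
    · obtain ⟨rfl, rfl⟩ := decomp_unique (by omega) hk' hx
      rcases hc with ⟨_, hl2⟩ | h
      · exact ⟨l, by omega, rfl⟩
      · exact absurd h hj
  · rintro ⟨l, hl, rfl⟩
    exact Or.inr ⟨j, k, l, by omega, by omega, rfl, rfl, Or.inl ⟨hk, by omega⟩⟩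

lemma class_single {X : Set ℕ} {j : ℕ} (hj : j ∉ X) :
    {y | SX X (blockStart j + (2 * j + 3)) y} = {blockStart j + (2 * j + 3)} := by
  ext y
  simp only [Set.mem_setOf_eq, Set.mem_singleton_iff, SX]
  constructor
  · rintro (rfl | ⟨i, k', l, hk', hl, hx, rfl, hc⟩)
    · rfl
    · obtain ⟨rfl, rfl⟩ := decomp_unique (by omega) hk' hx
      rcases hc with ⟨h, _⟩ | h
      · omega
      · exact absurd h hj
  · rintro rfl
    exact Or.inl rfl

/-- `S_X` is an equivalence relation, and for each `i`: it has a class of cardinality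
exactly `2i+4` iff `i ∈ X`, and a class of cardinality exactly `2i+3` iff `i ∉ X`. -/
theorem SX_equivalence_and_classes (X : Set ℕ) :
    Equivalence (SX X) ∧
    ∀ i : ℕ,
      ((∃ x, ({y | SX X x y}).encard = ((2 * i + 4 : ℕ) : ℕ∞)) ↔ i ∈ X) ∧
      ((∃ x, ({y | SX X x y}).encard = ((2 * i + 3 : ℕ) : ℕ∞)) ↔ i ∉ X) := by
  refine ⟨SX_equiv X, fun i => ⟨⟨?_, ?_⟩, ⟨?_, ?_⟩⟩⟩
  · rintro ⟨x, hx⟩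
    obtain ⟨j, k, hk, rfl⟩ := decomp_exists x
    by_cases hj : j ∈ X
    · rw [class_mem hj hk, encard_image_Iio] at hx
      obtain rfl : i = j := by have := Nat.cast_inj.mp hx; omega
      exact hj
    · by_cases hk2 : k ≤ 2 * j + 2
      · rw [class_small hj hk2, encard_image_Iio] at hx
        exact absurd (Nat.cast_inj.mp hx) (by omega)
      · obtain rfl : k = 2 * j + 3 := by omega
        rw [class_single hj, Set.encard_singleton] at hx
        have h1 : ((1 : ℕ) : ℕ∞) = ((2 * i + 4 : ℕ) : ℕ∞) := by exact_mod_cast hx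
        exact absurd (Nat.cast_inj.mp h1) (by omega)
  · intro hi
    exact ⟨blockStart i + 0, by rw [class_mem hi (by omega), encard_image_Iio]⟩
  · rintro ⟨x, hx⟩
    obtain ⟨j, k, hk, rfl⟩ := decomp_exists x
    by_cases hj : j ∈ X
    · rw [class_mem hj hk, encard_image_Iio] at hx
      exact absurd (Nat.cast_inj.mp hx) (by omega)
    · by_cases hk2 : k ≤ 2 * j + 2
      · rw [class_small hj hk2, encard_image_Iio] at hx
        obtain rfl : i = j := by have := Nat.cast_inj.mp hx; omega
        exact hj
      · obtain rfl : k = 2 * j + 3 := by omega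
        rw [class_single hj, Set.encard_singleton] at hx
        have h1 : ((1 : ℕ) : ℕ∞) = ((2 * i + 3 : ℕ) : ℕ∞) := by exact_mod_cast hx
        exact absurd (Nat.cast_inj.mp h1) (by omega)
  · intro hi
    exact ⟨blockStart i + 0, by rw [class_small hi (by omega), encard_image_Iio]⟩
end

section
/- Let B ⊆ ℕ be a Δ⁰₂ set with 0 ∉ B. Then there exists a c.e. (Σ⁰₁) preorder S on ℕ, a partition of ℕ into {c, d} ∪ {a_i : i ∈ ℕ} ∪ {b_j : j ∈ ℕ}, and a function v : ℕ → ℕ such that (writing x <_S y for x S y ∧ ¬(y S x)): S is reflexive; the elements a_i are pairwise S-incomparable; c <_S a_i for every i; every a_i is S-incomparable with d; c and d are S-incomparable; b_{j+1} <_S b_j <_S d for every j; every b_j is S-incomparable with c; for all i,j one has b_j <_S a_i if and only if j ≥ v(i), and never a_i S b_j; for every nonzero x ∈ ℕ, if x ∈ B then there is exactly one i with v(i) = x, and if x ∉ B then there is no i with v(i) = x; and the set {i : v(i) = 0} is infinite. -/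
/-- A set `B ⊆ ℕ` is Δ⁰₂: it has a total computable {0,1}-valued approximation
converging in the limit to its characteristic function. -/
def Delta02Set (B : Set ℕ) : Prop :=
  ∃ g : ℕ → ℕ → Bool, Computable₂ g ∧ ∀ x, ∃ N, ∀ s, N ≤ s → (g x s = true ↔ x ∈ B)

/-- The structural description of the preorder `S_B` from the paper, with distinguished
elements `c, d`, families `a i`, `b j` partitioning ℕ, and the parameter function `v`
(writing "`x` strictly below `y`" for `S x y ∧ ¬ S y x`): the `a i` are pairwise
incomparable, `c` is strictly below every `a i`, each `a i` is incomparable with `d`,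
`c` and `d` are incomparable, `b (j+1)` is strictly below `b j`, which is strictly below
`d`, each `b j` is incomparable with `c`, `b j` is strictly below `a i` iff `j ≥ v i`
(and never `a i S b j`), and infinitely many `i` satisfy `v i = 0`. -/
def SBCore (S : ℕ → ℕ → Prop) (c d : ℕ) (a b : ℕ → ℕ) (v : ℕ → ℕ) : Prop :=
  Function.Injective a ∧ Function.Injective b ∧
  c ≠ d ∧ (∀ i, a i ≠ c) ∧ (∀ i, a i ≠ d) ∧ (∀ j, b j ≠ c) ∧ (∀ j, b j ≠ d) ∧
  (∀ i j, a i ≠ b j) ∧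
  (∀ n : ℕ, n = c ∨ n = d ∨ (∃ i, n = a i) ∨ (∃ j, n = b j)) ∧
  (∀ x, S x x) ∧
  (∀ i j, i ≠ j → ¬ S (a i) (a j)) ∧
  (∀ i, S c (a i) ∧ ¬ S (a i) c) ∧
  (∀ i, ¬ S (a i) d ∧ ¬ S d (a i)) ∧
  (¬ S c d ∧ ¬ S d c) ∧
  (∀ j, S (b (j + 1)) (b j) ∧ ¬ S (b j) (b (j + 1))) ∧
  (∀ j, S (b j) d ∧ ¬ S d (b j)) ∧
  (∀ j, ¬ S (b j) c ∧ ¬ S c (b j)) ∧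
  (∀ i j, (S (b j) (a i) ∧ ¬ S (a i) (b j)) ↔ v i ≤ j) ∧
  (∀ i j, ¬ S (a i) (b j)) ∧
  Set.Infinite {i : ℕ | v i = 0}

/-!
Take `c = 0`, `d = 1`, `a i = 2 i + 2`, `b j = 2 j + 3`, and let all relations be forced by the
shape of `S_B` except `b j S a i ↔ v i ≤ j`. Let `i` code a pair `(x, n)` and put `v i = x` if `n`
is the stage at which the approximation `g x` settles on `true`, and `v i = 0` otherwise. Each
`x ∈ B` has exactly one settling stage and each `x ∉ B` none, so `v` takes every nonzero `x ∈ B`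
once and no nonzero `x ∉ B`, while the pairs `(0, n)` give infinitely many zeros. The relation is
c.e. because "`n` is the settling stage of `g x`" is a `Π⁰₁` claim, so `v i ≤ j`, i.e. `x ≤ j` or
the claim fails, is `Σ⁰₁`.
-/

theorem Computable₂.rePred_exists {α : Type*} [Primcodable α] {f : α → ℕ → Bool}
    (hf : Computable₂ f) : REPred fun a => ∃ s, f a s = true := by
  refine (Partrec.rfind hf.partrec₂).dom_re.of_eq fun a => Nat.rfind_dom.trans ?_
  exact ⟨fun ⟨s, hs, _⟩ => ⟨s, by simpa using hs⟩,
    fun ⟨s, hs⟩ => ⟨s, by simpa using hs, fun _ => trivial⟩⟩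

/-- `f` is `false` at stage `n - 1` (if `n > 0`) and `true` at every stage `≥ n`. -/
def IsSettlingStage (f : ℕ → Bool) (n : ℕ) : Prop :=
  ∀ s, n ≤ s + 1 → f s = decide (n ≤ s)

theorem IsSettlingStage.unique {f : ℕ → Bool} {n n' : ℕ} (h : IsSettlingStage f n)
    (h' : IsSettlingStage f n') : n = n' := by
  by_contra hne
  wlog hlt : n < n' generalizing n n'
  · exact this h' h (Ne.symm hne) (by omega)
  have h₁ := h (n' - 1) (by omega)
  have h₂ := h' (n' - 1) (by omega)
  rw [h₂, decide_eq_false (by omega), decide_eq_true (by omega)] at h₁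
  exact Bool.false_ne_true h₁

theorem exists_isSettlingStage_iff {f : ℕ → Bool} :
    (∃ n, IsSettlingStage f n) ↔ ∃ N, ∀ s, N ≤ s → f s = true := by
  classical
  refine ⟨fun ⟨n, hn⟩ => ⟨n, fun s hs => by simpa [hs] using hn s (by omega)⟩, fun h => ?_⟩
  refine ⟨Nat.find h, fun s hs => ?_⟩
  by_cases hle : Nat.find h ≤ s
  · simpa [hle] using Nat.find_spec h s hle
  · rw [decide_eq_false hle, Bool.eq_false_iff]
    intro hfs
    refine Nat.find_min h (m := s) (by omega) fun t ht => ?_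
    rcases ht.eq_or_lt with rfl | hlt
    · exact hfs
    · exact Nat.find_spec h t (by omega)

theorem exists_isSettlingStage_iff_mem {g : ℕ → ℕ → Bool} {B : Set ℕ}
    (hgB : ∀ x, ∃ N, ∀ s, N ≤ s → (g x s = true ↔ x ∈ B)) (x : ℕ) :
    (∃ n, IsSettlingStage (g x) n) ↔ x ∈ B := by
  obtain ⟨N, hN⟩ := hgB x
  rw [exists_isSettlingStage_iff]
  exact ⟨fun ⟨M, hM⟩ => (hN _ (le_max_left N M)).1 (hM _ (le_max_right N M)),
    fun hx => ⟨N, fun s hs => (hN s hs).2 hx⟩⟩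

namespace SB

variable {g : ℕ → ℕ → Bool}

open Classical in
noncomputable def settledValue (g : ℕ → ℕ → Bool) (i : ℕ) : ℕ :=
  if IsSettlingStage (g i.unpair.1) i.unpair.2 then i.unpair.1 else 0

theorem settledValue_eq_iff {i x : ℕ} (hx : x ≠ 0) :
    settledValue g i = x ↔ i.unpair.1 = x ∧ IsSettlingStage (g x) i.unpair.2 := by
  unfold settledValue
  split_ifs with h
  · exact ⟨fun hi => ⟨hi, hi ▸ h⟩, And.left⟩
  · exact ⟨fun h0 => absurd h0.symm hx, fun ⟨hi, hs⟩ => absurd (hi ▸ hs) h⟩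

theorem exists_settledValue_eq_iff {x : ℕ} (hx : x ≠ 0) :
    (∃ i, settledValue g i = x) ↔ ∃ n, IsSettlingStage (g x) n := by
  simp only [settledValue_eq_iff hx]
  exact ⟨fun ⟨i, hi, hs⟩ => ⟨_, hs⟩, fun ⟨n, hn⟩ => ⟨Nat.pair x n, by simpa using hn⟩⟩

theorem settledValue_inj_of_ne_zero {i i' x : ℕ} (hx : x ≠ 0) (hi : settledValue g i = x)
    (hi' : settledValue g i' = x) : i = i' := by
  rw [settledValue_eq_iff hx] at hi hi'
  rw [← Nat.pair_unpair i, ← Nat.pair_unpair i', hi.1, hi'.1, hi.2.unique hi'.2]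

theorem settledValue_pair_zero (n : ℕ) : settledValue g (Nat.pair 0 n) = 0 := by
  simp [settledValue]

theorem infinite_settledValue_eq_zero : {i | settledValue g i = 0}.Infinite :=
  Set.infinite_of_injective_forall_mem (fun _ _ h => (Nat.pair_eq_pair.1 h).2)
    settledValue_pair_zero

def settledValueLeAt (g : ℕ → ℕ → Bool) (i j s : ℕ) : Bool :=
  decide (i.unpair.1 ≤ j) ||
    -- stage `s` refutes `IsSettlingStage (g i.unpair.1) i.unpair.2`
    (decide (i.unpair.2 ≤ s + 1) && (g i.unpair.1 s != decide (i.unpair.2 ≤ s)))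

theorem settledValue_le_iff {i j : ℕ} :
    settledValue g i ≤ j ↔ ∃ s, settledValueLeAt g i j s = true := by
  have : settledValue g i ≤ j ↔
      i.unpair.1 ≤ j ∨ ¬ IsSettlingStage (g i.unpair.1) i.unpair.2 := by
    unfold settledValue; split_ifs with h <;> simp [h]
  simp only [this, IsSettlingStage, settledValueLeAt, not_forall, exists_prop, Bool.or_eq_true,
    Bool.and_eq_true, decide_eq_true_eq, bne_iff_ne, ne_eq]
  exact ⟨fun h => h.elim (fun h => ⟨0, .inl h⟩) fun ⟨s, hs⟩ => ⟨s, .inr hs⟩,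
    fun ⟨s, hs⟩ => hs.imp id fun hs => ⟨s, hs⟩⟩

theorem computable_settledValueLeAt (hg : Computable₂ g) :
    Computable fun q : (ℕ × ℕ) × ℕ => settledValueLeAt g q.1.1 q.1.2 q.2 := by
  have hx : Primrec fun q : (ℕ × ℕ) × ℕ => q.1.1.unpair.1 :=
    Primrec.fst.comp (Primrec.unpair.comp (Primrec.fst.comp Primrec.fst))
  have hn : Primrec fun q : (ℕ × ℕ) × ℕ => q.1.1.unpair.2 :=
    Primrec.snd.comp (Primrec.unpair.comp (Primrec.fst.comp Primrec.fst))
  have hj : Primrec fun q : (ℕ × ℕ) × ℕ => q.1.2 := Primrec.snd.comp Primrec.fst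
  have hs : Primrec fun q : (ℕ × ℕ) × ℕ => q.2 := Primrec.snd
  exact Primrec.or.to_comp.comp (Primrec.nat_le.comp hx hj).decide.to_comp
    (Primrec.and.to_comp.comp (Primrec.nat_le.comp hn (Primrec.succ.comp hs)).decide.to_comp
      (Primrec.not.to_comp.comp (Primrec.beq.to_comp.comp (hg.comp hx.to_comp hs.to_comp)
        (Primrec.nat_le.comp hn hs).decide.to_comp)))

abbrev IsA (n : ℕ) : Prop := 2 ≤ n ∧ n % 2 = 0

abbrev IsB (n : ℕ) : Prop := 3 ≤ n ∧ n % 2 = 1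

abbrev BaseRel (m n : ℕ) : Prop :=
  m = n ∨ (m = 0 ∧ IsA n) ∨ (IsB m ∧ (n = 1 ∨ (IsB n ∧ n ≤ m)))

def Rel (g : ℕ → ℕ → Bool) (m n : ℕ) : Prop :=
  BaseRel m n ∨ (IsB m ∧ IsA n ∧ settledValue g (n / 2 - 1) ≤ m / 2 - 1)

def relAt (g : ℕ → ℕ → Bool) (p : ℕ × ℕ) (s : ℕ) : Bool :=
  decide (BaseRel p.1 p.2) ||
    (decide (IsB p.1 ∧ IsA p.2) && settledValueLeAt g (p.2 / 2 - 1) (p.1 / 2 - 1) s)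

theorem primrecPred_isA : PrimrecPred IsA :=
  (Primrec.nat_le.comp (.const 2) .id).and
    (Primrec.eq.comp (Primrec.nat_mod.comp .id (.const 2)) (.const 0))

theorem primrecPred_isB : PrimrecPred IsB :=
  (Primrec.nat_le.comp (.const 3) .id).and
    (Primrec.eq.comp (Primrec.nat_mod.comp .id (.const 2)) (.const 1))

theorem primrecRel_baseRel : PrimrecRel BaseRel :=
  (Primrec.eq.comp .fst .snd).or
    (((Primrec.eq.comp .fst (.const 0)).and (primrecPred_isA.comp .snd)).or
      ((primrecPred_isB.comp .fst).and ((Primrec.eq.comp .snd (.const 1)).or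
        ((primrecPred_isB.comp .snd).and (Primrec.nat_le.comp .snd .fst)))))

theorem computable₂_relAt (hg : Computable₂ g) : Computable₂ (relAt g) := by
  have half : Primrec fun n : ℕ => n / 2 - 1 :=
    Primrec.nat_sub.comp (Primrec.nat_div.comp .id (.const 2)) (.const 1)
  have hbase : Computable fun q : (ℕ × ℕ) × ℕ => decide (BaseRel q.1.1 q.1.2) :=
    (PrimrecPred.comp primrecRel_baseRel .fst).decide.to_comp
  have hkind : Computable fun q : (ℕ × ℕ) × ℕ => decide (IsB q.1.1 ∧ IsA q.1.2) :=
    ((primrecPred_isB.comp (Primrec.fst.comp .fst)).and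
      (primrecPred_isA.comp (Primrec.snd.comp .fst))).decide.to_comp
  have hargs : Primrec fun q : (ℕ × ℕ) × ℕ => ((q.1.2 / 2 - 1, q.1.1 / 2 - 1), q.2) :=
    ((half.comp (Primrec.snd.comp .fst)).pair (half.comp (Primrec.fst.comp .fst))).pair .snd
  have hval : Computable fun q : (ℕ × ℕ) × ℕ =>
      settledValueLeAt g (q.1.2 / 2 - 1) (q.1.1 / 2 - 1) q.2 :=
    ((computable_settledValueLeAt hg).comp hargs.to_comp).of_eq fun _ => rfl
  exact Primrec.or.to_comp.comp hbase (Primrec.and.to_comp.comp hkind hval)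

theorem rel_iff_exists_relAt {m n : ℕ} : Rel g m n ↔ ∃ s, relAt g (m, n) s = true := by
  simp only [Rel, relAt, settledValue_le_iff, Bool.or_eq_true, Bool.and_eq_true,
    decide_eq_true_eq]
  exact ⟨fun h => h.elim (fun h => ⟨0, .inl h⟩) fun ⟨hm, hn, s, hs⟩ => ⟨s, .inr ⟨⟨hm, hn⟩, hs⟩⟩,
    fun ⟨s, hs⟩ => hs.imp id fun ⟨⟨hm, hn⟩, hs⟩ => ⟨hm, hn, s, hs⟩⟩

theorem relCE_rel (hg : Computable₂ g) : RelCE (Rel g) :=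
  (computable₂_relAt hg).rePred_exists.of_eq fun _ => rel_iff_exists_relAt.symm

theorem rel_trans {m n k : ℕ} (hmn : Rel g m n) (hnk : Rel g n k) : Rel g m k := by
  rcases hnk with (rfl | hnk) | hnk
  · exact hmn
  all_goals simp only [Rel, BaseRel, IsA, IsB] at *; omega

theorem rel_b_a {i j : ℕ} : Rel g (2 * j + 3) (2 * i + 2) ↔ settledValue g i ≤ j := by
  have hi : (2 * i + 2) / 2 - 1 = i := by omega
  have hj : (2 * j + 3) / 2 - 1 = j := by omega
  simp only [Rel, BaseRel, IsA, IsB, hi, hj]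
  omega

theorem sbCore_rel : SBCore (Rel g) 0 1 (2 * · + 2) (2 * · + 3) (settledValue g) := by
  simp only [SBCore, rel_b_a]
  refine ⟨fun i i' h => ?_, fun j j' h => ?_, ?_, ?_, ?_, ?_, ?_, ?_, fun n => ?cover, ?_, ?_, ?_,
    ?_, ?_, ?_, ?_, ?_, ?_, ?_, infinite_settledValue_eq_zero⟩
  case cover =>
    obtain hn | hn | hn : n < 2 ∨ (2 ≤ n ∧ n % 2 = 0) ∨ (2 ≤ n ∧ n % 2 = 1) := by omega
    · interval_cases n <;> simp
    · exact .inr (.inr (.inl ⟨n / 2 - 1, by omega⟩))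
    · exact .inr (.inr (.inr ⟨n / 2 - 1, by omega⟩))
  all_goals intros; (try dsimp only [Rel, BaseRel, IsA, IsB] at *); omega

end SB

theorem exists_ce_preorder_SB_general (B : Set ℕ) (hB : Delta02Set B) :
    ∃ (S : ℕ → ℕ → Prop) (c d : ℕ) (a b : ℕ → ℕ) (v : ℕ → ℕ),
      Reflexive S ∧ Transitive S ∧ RelCE S ∧ SBCore S c d a b v ∧
      (∀ x : ℕ, x ≠ 0 →
        ((x ∈ B → ∃! i, v i = x) ∧ (x ∉ B → ∀ i, v i ≠ x))) := by
  obtain ⟨g, hg, hgB⟩ := hB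
  refine ⟨SB.Rel g, 0, 1, (2 * · + 2), (2 * · + 3), SB.settledValue g,
    fun _ => .inl (.inl rfl), fun _ _ _ => SB.rel_trans, SB.relCE_rel hg, SB.sbCore_rel,
    fun x hx => ⟨fun hxB => ?_, fun hxB i hi => ?_⟩⟩
  · obtain ⟨i, hi⟩ :=
      (SB.exists_settledValue_eq_iff hx).2 ((exists_isSettlingStage_iff_mem hgB x).2 hxB)
    exact ⟨i, hi, fun i' hi' => SB.settledValue_inj_of_ne_zero hx hi' hi⟩
  · exact hxB ((exists_isSettlingStage_iff_mem hgB x).1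
      ((SB.exists_settledValue_eq_iff hx).1 ⟨i, hi⟩))

/-- For every Δ⁰₂ set `B` with `0 ∉ B` there is a c.e. preorder `S` on ℕ realizing the
structural description `S_B`, where additionally every nonzero `x ∈ B` equals `v i` for
exactly one `i`, and no nonzero `x ∉ B` is a value of `v`. -/
theorem exists_ce_preorder_SB (B : Set ℕ) (hB : Delta02Set B) (h0 : 0 ∉ B) :
    ∃ (S : ℕ → ℕ → Prop) (c d : ℕ) (a b : ℕ → ℕ) (v : ℕ → ℕ),
      Reflexive S ∧ Transitive S ∧ RelCE S ∧ SBCore S c d a b v ∧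
      (∀ x : ℕ, x ≠ 0 →
        ((x ∈ B → ∃! i, v i = x) ∧ (x ∉ B → ∀ i, v i ≠ x))) :=
  exists_ce_preorder_SB_general B hB
end
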